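/- arXiv:2004.11190 — 3 statements merged into one kernel-verified Lean document; each statement's English description precedes it below -/
import Mathlib

section
/- Let (Ω, F, P) be a probability space, u > 0, (r_k)_{k≥1} nonnegative real constants with v_k = ∏_{j=1}^{k} 1/(1 + r_j) (v_0 = 1), and (R_k)_{k≥0}, (Y_k)_{k≥1}, (α_k)_{k≥1} real-valued random variables such that almost surely R_0 = u, α_k ≥ r_k and R_k ≥ (1 + α_k) R_{k−1} − Y_k for all k ≥ 1. Suppose Y_k = b_k ξ_k with positive real constants b_k satisfying b_k v_{k−1} ≤ b_1 for all k ≥ 1, where the random vectors (α_k, ξ_k), k ≥ 1, are independent and identically distributed, and the variables Y_k^* := Y_k/(1 + α_k) are mutually independent. Then for every κ ≥ 0 with E[e^{κ Y_1^*}] ≤ 1: P[∃ k ≥ 0, R_k < 0] ≤ e^{−κu} · E[e^{κ Y_1^*}] ≤ e^{−κu}. -/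
open MeasureTheory ProbabilityTheory Finset
open scoped ENNReal

/-!
Multiplying the surplus recursion by the discount factors `∏_{l ≤ k} (1 + α_l)⁻¹` makes it
telescope: `R_k ∏_{l ≤ k} (1 + α_l)⁻¹ ≥ u - S_k`, where `S_k = ∑_{j ≤ k} Y_j ∏_{l ≤ j} (1 + α_l)⁻¹`
is the discounted loss, so ruin at time `k` forces `S_k > u`.
The increment `S_{k+1} - S_k` is `c · b_1 ξ_{k+1} / (1 + α_{k+1})`, a copy of `Y*_1` independent of
the past, scaled by the past-measurable `c = b_{k+1} ∏_{l ≤ k} (1 + α_l)⁻¹ / b_1`, and `α ≥ r` with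
`b_{k+1} v_k ≤ b_1` gives `c ∈ [0, 1]`. By convexity `E[e^{c κ Y*_1}] ≤ 1`, so `e^{κ S_k}` is a
supermartingale from `k = 1` on. Splitting `{∃ k, S_k > u}` at the first passage time, where
`e^{κ S} ≥ e^{κ u}`, bounds its probability by `e^{-κ u} E[e^{κ S_1}] = e^{-κ u} E[e^{κ Y*_1}]`.
-/

section Discount

noncomputable def discount (a : ℕ → ℝ) (k : ℕ) : ℝ := ∏ j ∈ Icc 1 k, (1 + a j)⁻¹

noncomputable def discountedSum (a y : ℕ → ℝ) (k : ℕ) : ℝ := ∑ j ∈ Icc 1 k, y j * discount a j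

variable {a y : ℕ → ℝ}

lemma discount_succ (a : ℕ → ℝ) (k : ℕ) :
    discount a (k + 1) = discount a k * (1 + a (k + 1))⁻¹ :=
  prod_Icc_succ_top (by omega) _

lemma discountedSum_succ (a y : ℕ → ℝ) (k : ℕ) :
    discountedSum a y (k + 1) = discountedSum a y k + y (k + 1) * discount a (k + 1) :=
  sum_Icc_succ_top (by omega) _

lemma discountedSum_one (a y : ℕ → ℝ) : discountedSum a y 1 = y 1 / (1 + a 1) := by
  simp [discountedSum, discount, div_eq_mul_inv]

lemma discount_pos (ha : ∀ j, 1 ≤ j → 0 < 1 + a j) (k : ℕ) : 0 < discount a k :=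
  prod_pos fun j hj => inv_pos.2 (ha j (mem_Icc.1 hj).1)

lemma discount_le_discount {ρ : ℕ → ℝ} {k : ℕ} (hρ : ∀ j ∈ Icc 1 k, 0 ≤ ρ j)
    (ha : ∀ j ∈ Icc 1 k, ρ j ≤ a j) : discount a k ≤ discount ρ k :=
  prod_le_prod (fun j hj => inv_nonneg.2 (by linarith [hρ j hj, ha j hj]))
    fun j hj => inv_anti₀ (by linarith [hρ j hj]) (by linarith [ha j hj])

lemma sub_discountedSum_le_mul_discount {R : ℕ → ℝ} {u : ℝ} (hR0 : R 0 = u)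
    (ha : ∀ j, 1 ≤ j → 0 < 1 + a j) (hR : ∀ k, (1 + a (k + 1)) * R k - y (k + 1) ≤ R (k + 1))
    (k : ℕ) : u - discountedSum a y k ≤ R k * discount a k := by
  induction k with
  | zero => simp [discountedSum, discount, hR0]
  | succ k ih =>
    have hd : 0 ≤ discount a (k + 1) := (discount_pos ha _).le
    have hcancel : (1 + a (k + 1)) * discount a (k + 1) = discount a k := by
      rw [discount_succ]; field_simp [(ha (k + 1) (by omega)).ne']
    calc u - discountedSum a y (k + 1)
        ≤ R k * discount a k - y (k + 1) * discount a (k + 1) := by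
          rw [discountedSum_succ]; linarith
      _ = ((1 + a (k + 1)) * R k - y (k + 1)) * discount a (k + 1) := by
          rw [← hcancel]; ring
      _ ≤ R (k + 1) * discount a (k + 1) := mul_le_mul_of_nonneg_right (hR k) hd

lemma lt_discountedSum_of_neg {R : ℕ → ℝ} {u : ℝ} (hR0 : R 0 = u)
    (ha : ∀ j, 1 ≤ j → 0 < 1 + a j) (hR : ∀ k, (1 + a (k + 1)) * R k - y (k + 1) ≤ R (k + 1))
    {k : ℕ} (hk : R k < 0) : u < discountedSum a y k := by
  nlinarith [discount_pos ha k, sub_discountedSum_le_mul_discount hR0 ha hR k]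

end Discount

lemma ENNReal.tsum_le_of_add_succ_le {d T : ℕ → ℝ≥0∞} (h : ∀ n, d n + T (n + 1) ≤ T n) :
    ∑' n, d n ≤ T 0 := by
  have key : ∀ n, ∑ i ∈ range n, d i + T n ≤ T 0 := by
    intro n
    induction n with
    | zero => simp
    | succ n ih => calc
        ∑ i ∈ range (n + 1), d i + T (n + 1) = ∑ i ∈ range n, d i + (d n + T (n + 1)) := by
          rw [sum_range_succ, add_assoc]
        _ ≤ ∑ i ∈ range n, d i + T n := by gcongr; exact h n
        _ ≤ T 0 := ih
  exact ENNReal.tsum_le_of_sum_range_le fun n => le_trans le_self_add (key n)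

lemma lintegral_exp_mul_le_one {β : Type*} [MeasurableSpace β] {ν : Measure β}
    [IsProbabilityMeasure ν] {h : β → ℝ} (hh : Measurable h)
    (h1 : ∫⁻ w, ENNReal.ofReal (Real.exp (h w)) ∂ν ≤ 1) {t : ℝ} (ht0 : 0 ≤ t) (ht1 : t ≤ 1) :
    ∫⁻ w, ENNReal.ofReal (Real.exp (t * h w)) ∂ν ≤ 1 := by
  have hconv : ∀ x : ℝ, Real.exp (t * x) ≤ t * Real.exp x + (1 - t) := fun x => by
    have := convexOn_exp.2 (Set.mem_univ x) (Set.mem_univ 0) ht0 (sub_nonneg.2 ht1)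
      (add_sub_cancel t 1)
    simpa using this
  calc ∫⁻ w, ENNReal.ofReal (Real.exp (t * h w)) ∂ν
      ≤ ∫⁻ w, (ENNReal.ofReal t * ENNReal.ofReal (Real.exp (h w)) + ENNReal.ofReal (1 - t)) ∂ν :=
        lintegral_mono fun w => by
          rw [← ENNReal.ofReal_mul ht0, ← ENNReal.ofReal_add (by positivity) (by linarith)]
          exact ENNReal.ofReal_le_ofReal (hconv _)
    _ = ENNReal.ofReal t * ∫⁻ w, ENNReal.ofReal (Real.exp (h w)) ∂ν + ENNReal.ofReal (1 - t) := by
        rw [lintegral_add_right _ measurable_const, lintegral_const_mul _ (by fun_prop),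
          lintegral_const, measure_univ, mul_one]
    _ ≤ ENNReal.ofReal t * 1 + ENNReal.ofReal (1 - t) := by gcongr
    _ = 1 := by
        rw [mul_one, ← ENNReal.ofReal_add ht0 (by linarith), add_sub_cancel, ENNReal.ofReal_one]

lemma ProbabilityTheory.IndepFun.lintegral_comp_eq_lintegral_lintegral_map {Ω β γ : Type*}
    [MeasurableSpace Ω] [MeasurableSpace β] [MeasurableSpace γ] {P : Measure Ω} [IsFiniteMeasure P]
    {X : Ω → β} {W : Ω → γ} (hXW : IndepFun X W P) (hX : Measurable X) (hW : Measurable W)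
    {H : β × γ → ℝ≥0∞} (hH : Measurable H) :
    ∫⁻ ω, H (X ω, W ω) ∂P = ∫⁻ ω, ∫⁻ w, H (X ω, w) ∂(P.map W) ∂P := by
  calc ∫⁻ ω, H (X ω, W ω) ∂P = ∫⁻ p, H p ∂(P.map fun ω => (X ω, W ω)) :=
        (lintegral_map hH (hX.prodMk hW)).symm
    _ = ∫⁻ p, H p ∂((P.map X).prod (P.map W)) := by
        rw [hXW.map_prod_eq_prod_map_map hX.aemeasurable hW.aemeasurable]
    _ = ∫⁻ x, ∫⁻ w, H (x, w) ∂(P.map W) ∂(P.map X) := lintegral_prod _ hH.aemeasurable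
    _ = ∫⁻ ω, ∫⁻ w, H (X ω, w) ∂(P.map W) ∂P := lintegral_map hH.lintegral_prod_right' hX

lemma setLIntegral_exp_add_mul_le {Ω β : Type*} {m mΩ : MeasurableSpace Ω} [MeasurableSpace β]
    {P : Measure Ω} [IsProbabilityMeasure P] {W : Ω → β} (hm : m ≤ mΩ) (hW : Measurable W)
    (hind : Indep m (MeasurableSpace.comap W inferInstance) P) {C : Set Ω}
    (hC : MeasurableSet[m] C) {X c : Ω → ℝ} (hX : Measurable[m] X) (hc : Measurable[m] c)
    (hc01 : ∀ᵐ ω ∂P, 0 ≤ c ω ∧ c ω ≤ 1) {h : β → ℝ} (hh : Measurable h)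
    (h1 : ∫⁻ w, ENNReal.ofReal (Real.exp (h w)) ∂(P.map W) ≤ 1) :
    ∫⁻ ω in C, ENNReal.ofReal (Real.exp (X ω + c ω * h (W ω))) ∂P ≤
      ∫⁻ ω in C, ENNReal.ofReal (Real.exp (X ω)) ∂P := by
  have := Measure.isProbabilityMeasure_map (μ := P) hW.aemeasurable
  set F := C.indicator fun ω => ENNReal.ofReal (Real.exp (X ω))
  have hF : Measurable[m] F := (by fun_prop : Measurable[m] _).indicator hC
  have hFc : Measurable[m] fun ω => (F ω, c ω) := hF.prodMk hc
  have hindep : IndepFun (fun ω => (F ω, c ω)) W P :=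
    (IndepFun_iff_Indep _ _ _).2 (indep_of_indep_of_le_left hind hFc.comap_le)
  have hH : Measurable fun p : (ℝ≥0∞ × ℝ) × β =>
      p.1.1 * ENNReal.ofReal (Real.exp (p.1.2 * h p.2)) := by
    fun_prop
  calc ∫⁻ ω in C, ENNReal.ofReal (Real.exp (X ω + c ω * h (W ω))) ∂P
      = ∫⁻ ω, F ω * ENNReal.ofReal (Real.exp (c ω * h (W ω))) ∂P := by
        rw [← lintegral_indicator (hm C hC)]
        refine lintegral_congr fun ω => ?_
        by_cases hω : ω ∈ C
        · simp [F, hω, Real.exp_add, ENNReal.ofReal_mul (Real.exp_nonneg _)]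
        · simp [F, hω]
    _ = ∫⁻ ω, F ω * ∫⁻ w, ENNReal.ofReal (Real.exp (c ω * h w)) ∂(P.map W) ∂P := by
        rw [hindep.lintegral_comp_eq_lintegral_lintegral_map ((hFc.mono hm le_rfl)) hW hH]
        exact lintegral_congr fun ω => lintegral_const_mul _ (by fun_prop)
    _ ≤ ∫⁻ ω, F ω ∂P := lintegral_mono_ae <| hc01.mono fun ω hω =>
        mul_le_of_le_one_right' (lintegral_exp_mul_le_one hh h1 hω.1 hω.2)
    _ = ∫⁻ ω in C, ENNReal.ofReal (Real.exp (X ω)) ∂P := lintegral_indicator (hm C hC) _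

lemma measure_le_exp_neg_mul_setLIntegral_exp {Ω : Type*} [MeasurableSpace Ω] {P : Measure Ω}
    {f : Ω → ℝ} (hf : Measurable f) {u κ : ℝ} (hκ : 0 ≤ κ) {s : Set Ω} (hs : ∀ ω ∈ s, u ≤ f ω) :
    P s ≤ ENNReal.ofReal (Real.exp (-κ * u)) * ∫⁻ ω in s, ENNReal.ofReal (Real.exp (κ * f ω)) ∂P :=
  calc P s = ENNReal.ofReal (Real.exp (-κ * u)) *
        ∫⁻ _ in s, ENNReal.ofReal (Real.exp (κ * u)) ∂P := by
        rw [setLIntegral_const, ← mul_assoc, ← ENNReal.ofReal_mul (Real.exp_nonneg _),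
          ← Real.exp_add, neg_mul, neg_add_cancel, Real.exp_zero, ENNReal.ofReal_one, one_mul]
    _ ≤ _ := mul_le_mul_right (setLIntegral_mono (by fun_prop) fun ω hω =>
        ENNReal.ofReal_le_ofReal (Real.exp_le_exp.2 (mul_le_mul_of_nonneg_left (hs ω hω) hκ))) _

lemma measure_exists_lt_le_of_setLIntegral_exp_succ_le {Ω : Type*} [MeasurableSpace Ω]
    {P : Measure Ω} {S : ℕ → Ω → ℝ} (hS : ∀ n, Measurable (S n)) {u κ : ℝ} (hκ : 0 ≤ κ)
    (hstep : ∀ n, ∫⁻ ω in {ω | ∀ i ≤ n, S i ω ≤ u}, ENNReal.ofReal (Real.exp (κ * S (n + 1) ω)) ∂P ≤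
      ∫⁻ ω in {ω | ∀ i ≤ n, S i ω ≤ u}, ENNReal.ofReal (Real.exp (κ * S n ω)) ∂P) :
    P {ω | ∃ n, u < S n ω} ≤
      ENNReal.ofReal (Real.exp (-κ * u)) * ∫⁻ ω, ENNReal.ofReal (Real.exp (κ * S 0 ω)) ∂P := by
  set below : ℕ → Set Ω := fun n => {ω | ∀ i < n, S i ω ≤ u}
  set firstPassage : ℕ → Set Ω := fun n => below n ∩ {ω | u < S n ω}
  set f : ℕ → Ω → ℝ≥0∞ := fun n ω => ENNReal.ofReal (Real.exp (κ * S n ω))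
  have hsplit : ∀ n, ∫⁻ ω in firstPassage n, f n ω ∂P + ∫⁻ ω in below (n + 1), f (n + 1) ω ∂P ≤
      ∫⁻ ω in below n, f n ω ∂P := by
    intro n
    have hdiff : below n \ {ω | u < S n ω} = below (n + 1) := by
      ext ω
      simp only [below, Set.mem_sdiff, Set.mem_ofPred_eq, not_lt, Nat.lt_succ_iff_lt_or_eq]
      grind
    rw [← lintegral_inter_add_sdiff (f n) (below n) (measurableSet_lt measurable_const (hS n)),
      hdiff]
    exact add_le_add le_rfl (by simpa only [below, Nat.lt_succ_iff] using hstep n)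
  have hcover : {ω | ∃ n, u < S n ω} ⊆ ⋃ n, firstPassage n := by
    intro ω hex
    classical
    exact Set.mem_iUnion.2 ⟨Nat.find hex, fun i hi => not_lt.1 (Nat.find_min hex hi),
      Nat.find_spec hex⟩
  calc P {ω | ∃ n, u < S n ω}
      ≤ ∑' n, P (firstPassage n) := (measure_mono hcover).trans (measure_iUnion_le _)
    _ ≤ ∑' n, ENNReal.ofReal (Real.exp (-κ * u)) * ∫⁻ ω in firstPassage n, f n ω ∂P :=
        ENNReal.tsum_le_tsum fun n =>
          measure_le_exp_neg_mul_setLIntegral_exp (hS n) hκ fun _ hω => hω.2.le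
    _ = ENNReal.ofReal (Real.exp (-κ * u)) * ∑' n, ∫⁻ ω in firstPassage n, f n ω ∂P :=
        ENNReal.tsum_mul_left
    _ ≤ ENNReal.ofReal (Real.exp (-κ * u)) * ∫⁻ ω in below 0, f 0 ω ∂P := by
        gcongr
        exact ENNReal.tsum_le_of_add_succ_le hsplit
    _ = ENNReal.ofReal (Real.exp (-κ * u)) * ∫⁻ ω, ENNReal.ofReal (Real.exp (κ * S 0 ω)) ∂P := by
        simp [below, f]

section RiskModel

variable {Ω : Type*}

noncomputable def discountedLoss (α ξ : ℕ → Ω → ℝ) (b : ℕ → ℝ) (k : ℕ) (ω : Ω) : ℝ :=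
  discountedSum (α · ω) (fun j => b j * ξ j ω) k

lemma discountedLoss_succ (α ξ : ℕ → Ω → ℝ) (b : ℕ → ℝ) (k : ℕ) (ω : Ω) :
    discountedLoss α ξ b (k + 1) ω = discountedLoss α ξ b k ω +
      discount (α · ω) k * b (k + 1) * (ξ (k + 1) ω / (1 + α (k + 1) ω)) := by
  rw [discountedLoss, discountedSum_succ, discount_succ, ← discountedLoss]
  ring

abbrev pastMeasurableSpace (α ξ : ℕ → Ω → ℝ) (k : ℕ) : MeasurableSpace Ω :=
  ⨆ i ∈ Set.Iio k, MeasurableSpace.comap (fun ω => (α (i + 1) ω, ξ (i + 1) ω)) inferInstance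

lemma measurable_discount {m : MeasurableSpace Ω} {α : ℕ → Ω → ℝ} {k : ℕ}
    (hα : ∀ j ∈ Icc 1 k, Measurable[m] (α j)) : Measurable[m] fun ω => discount (α · ω) k :=
  Finset.measurable_prod _ fun j hj => ((hα j hj).const_add 1).inv

lemma measurable_discountedLoss {m : MeasurableSpace Ω} {α ξ : ℕ → Ω → ℝ} {b : ℕ → ℝ} {k : ℕ}
    (hα : ∀ j ∈ Icc 1 k, Measurable[m] (α j)) (hξ : ∀ j ∈ Icc 1 k, Measurable[m] (ξ j)) :
    Measurable[m] (discountedLoss α ξ b k) :=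
  Finset.measurable_sum _ fun j hj => ((hξ j hj).const_mul _).mul <|
    measurable_discount fun l hl => hα l (Icc_subset_Icc_right (mem_Icc.1 hj).2 hl)

lemma measurable_pastMeasurableSpace {α ξ : ℕ → Ω → ℝ} {j k : ℕ} (hj : j ∈ Icc 1 k) :
    Measurable[pastMeasurableSpace α ξ k] fun ω => (α j ω, ξ j ω) := by
  obtain ⟨i, rfl⟩ : ∃ i, j = i + 1 := ⟨j - 1, by grind⟩
  exact (comap_measurable _).mono (le_iSup₂ (f := fun i (_ : i ∈ Set.Iio k) =>
    MeasurableSpace.comap (fun ω => (α (i + 1) ω, ξ (i + 1) ω)) inferInstance) i (by grind)) le_rfl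

lemma measurable_discountedLoss_pastMeasurableSpace {α ξ : ℕ → Ω → ℝ} (b : ℕ → ℝ) {j k : ℕ}
    (hjk : j ≤ k) : Measurable[pastMeasurableSpace α ξ k] (discountedLoss α ξ b j) :=
  measurable_discountedLoss
    (fun _ hi => (measurable_pastMeasurableSpace (Icc_subset_Icc_right hjk hi)).fst)
    fun _ hi => (measurable_pastMeasurableSpace (Icc_subset_Icc_right hjk hi)).snd

lemma setLIntegral_exp_discountedLoss_succ_le [MeasurableSpace Ω] {P : Measure Ω}
    [IsProbabilityMeasure P] {α ξ : ℕ → Ω → ℝ} (hα : ∀ k, Measurable (α k))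
    (hξ : ∀ k, Measurable (ξ k))
    (hindep : iIndepFun (fun k ω => (α (k + 1) ω, ξ (k + 1) ω)) P) {k : ℕ}
    (hident : P.map (fun ω => (α (k + 1) ω, ξ (k + 1) ω)) = P.map (fun ω => (α 1 ω, ξ 1 ω)))
    {r : ℕ → ℝ} (hr : ∀ j, 1 ≤ j → 0 ≤ r j) (hrα : ∀ᵐ ω ∂P, ∀ j, 1 ≤ j → r j ≤ α j ω)
    {b : ℕ → ℝ} (hb1 : 0 < b 1) (hbk : 0 ≤ b (k + 1)) (hbr : b (k + 1) * discount r k ≤ b 1)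
    {κ : ℝ} (hκ1 : ∫⁻ ω, ENNReal.ofReal (Real.exp (κ * discountedLoss α ξ b 1 ω)) ∂P ≤ 1)
    {C : Set Ω} (hC : MeasurableSet[pastMeasurableSpace α ξ k] C) :
    ∫⁻ ω in C, ENNReal.ofReal (Real.exp (κ * discountedLoss α ξ b (k + 1) ω)) ∂P ≤
      ∫⁻ ω in C, ENNReal.ofReal (Real.exp (κ * discountedLoss α ξ b k ω)) ∂P := by
  set W : ℕ → Ω → ℝ × ℝ := fun j ω => (α j ω, ξ j ω)
  have hW : ∀ j, Measurable (W j) := fun j => (hα j).prodMk (hξ j)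
  have hind : Indep (pastMeasurableSpace α ξ k)
      (MeasurableSpace.comap (W (k + 1)) inferInstance) P := by
    have := indep_iSup_of_disjoint (fun i => (hW (i + 1)).comap_le) hindep.iIndep
      (S := Set.Iio k) (T := {k}) (Set.disjoint_singleton_right.2 (lt_irrefl k))
    rwa [_root_.iSup_singleton] at this
  set c : Ω → ℝ := fun ω => discount (α · ω) k * b (k + 1) / b 1
  have hc : Measurable[pastMeasurableSpace α ξ k] c :=
    ((measurable_discount fun _ hj =>
      (measurable_pastMeasurableSpace hj).fst).mul_const _).div_const _
  have hc01 : ∀ᵐ ω ∂P, 0 ≤ c ω ∧ c ω ≤ 1 := hrα.mono fun ω hω => by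
    have hpos := (discount_pos (a := (α · ω)) fun j hj => by linarith [hr j hj, hω j hj]) k
    have hle := discount_le_discount (a := (α · ω)) (k := k)
      (fun j hj => hr j (mem_Icc.1 hj).1) fun j hj => hω j (mem_Icc.1 hj).1
    constructor
    · positivity
    · rw [div_le_one hb1]; nlinarith
  set h : ℝ × ℝ → ℝ := fun w => κ * (b 1 * (w.2 / (1 + w.1)))
  have h1 : ∫⁻ w, ENNReal.ofReal (Real.exp (h w)) ∂(P.map (W (k + 1))) ≤ 1 := by
    rw [hident, lintegral_map (by fun_prop) (hW 1)]
    simpa [h, W, discountedLoss, discountedSum_one, mul_div_assoc] using hκ1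
  have hX : Measurable[pastMeasurableSpace α ξ k] fun ω => κ * discountedLoss α ξ b k ω :=
    (measurable_discountedLoss_pastMeasurableSpace b le_rfl).const_mul κ
  calc ∫⁻ ω in C, ENNReal.ofReal (Real.exp (κ * discountedLoss α ξ b (k + 1) ω)) ∂P
      = ∫⁻ ω in C,
          ENNReal.ofReal (Real.exp (κ * discountedLoss α ξ b k ω + c ω * h (W (k + 1) ω))) ∂P := by
        congr! 4 with ω
        simp only [discountedLoss_succ, c, h, W]
        field_simp
    _ ≤ _ := setLIntegral_exp_add_mul_le (iSup₂_le fun i _ => (hW (i + 1)).comap_le) (hW _)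
        hind hC hX hc hc01 (by fun_prop) h1

end RiskModel

theorem stmt16_general {Ω : Type*} [MeasurableSpace Ω] (P : Measure Ω) [IsProbabilityMeasure P]
    (u : ℝ) (hu : 0 < u)
    (r : ℕ → ℝ) (hr : ∀ k : ℕ, 1 ≤ k → 0 ≤ r k)
    (v : ℕ → ℝ) (hv : ∀ k, v k = ∏ j ∈ Finset.Icc 1 k, (1 + r j)⁻¹)
    (R Y α ξ : ℕ → Ω → ℝ)
    (hae : ∀ᵐ ω ∂P, R 0 ω = u ∧
      ∀ k : ℕ, 1 ≤ k → r k ≤ α k ω ∧ (1 + α k ω) * R (k - 1) ω - Y k ω ≤ R k ω)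
    (b : ℕ → ℝ) (hb : ∀ k : ℕ, 1 ≤ k → 0 < b k)
    (hYb : ∀ k : ℕ, 1 ≤ k → ∀ ω, Y k ω = b k * ξ k ω)
    (hbv : ∀ k : ℕ, 1 ≤ k → b k * v (k - 1) ≤ b 1)
    (hmeasα : ∀ k, Measurable (α k)) (hmeasξ : ∀ k, Measurable (ξ k))
    (hiid_indep : iIndepFun
      (fun k : ℕ => fun ω => (α (k + 1) ω, ξ (k + 1) ω)) P)
    (hiid_ident : ∀ k : ℕ, 1 ≤ k →
      Measure.map (fun ω => (α k ω, ξ k ω)) P = Measure.map (fun ω => (α 1 ω, ξ 1 ω)) P)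
    (Ystar : ℕ → Ω → ℝ) (hYstar : ∀ k ω, Ystar k ω = Y k ω / (1 + α k ω))
    (κ : ℝ) (hκ : 0 ≤ κ)
    (hκ1 : ∫⁻ ω, ENNReal.ofReal (Real.exp (κ * Ystar 1 ω)) ∂P ≤ 1) :
    P {ω | ∃ k : ℕ, R k ω < 0} ≤
      ENNReal.ofReal (Real.exp (-κ * u)) *
        ∫⁻ ω, ENNReal.ofReal (Real.exp (κ * Ystar 1 ω)) ∂P ∧
    ENNReal.ofReal (Real.exp (-κ * u)) *
        (∫⁻ ω, ENNReal.ofReal (Real.exp (κ * Ystar 1 ω)) ∂P) ≤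
      ENNReal.ofReal (Real.exp (-κ * u)) := by
  set L := discountedLoss α ξ b
  have hYstar1 : Ystar 1 = L 1 := funext fun ω => by
    simp [L, hYstar, hYb, discountedLoss, discountedSum_one]
  rw [hYstar1] at hκ1 ⊢
  have hrα : ∀ᵐ ω ∂P, ∀ k, 1 ≤ k → r k ≤ α k ω := hae.mono fun ω hω k hk => (hω.2 k hk).1
  have hruin : {ω | ∃ k, R k ω < 0} ≤ᵐ[P] {ω | ∃ n, u < L (n + 1) ω} := by
    filter_upwards [hae] with ω ⟨hR0, hstep⟩ ⟨k, hk⟩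
    obtain ⟨n, rfl⟩ : ∃ n, k = n + 1 := Nat.exists_eq_add_one.2 <| Nat.pos_of_ne_zero <| by
      rintro rfl; linarith
    refine ⟨n, lt_discountedSum_of_neg (R := (R · ω)) hR0 (fun j hj => ?_) (fun j => ?_) hk⟩
    · linarith [hr j hj, (hstep j hj).1]
    · simpa [hYb] using (hstep (j + 1) (by omega)).2
  refine ⟨(measure_mono_ae hruin).trans ?_, mul_le_of_le_one_right' hκ1⟩
  refine measure_exists_lt_le_of_setLIntegral_exp_succ_le (S := fun n => L (n + 1))
    (fun n => measurable_discountedLoss (fun j _ => hmeasα j) fun j _ => hmeasξ j) hκ fun n => ?_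
  refine setLIntegral_exp_discountedLoss_succ_le hmeasα hmeasξ hiid_indep (hiid_ident _ (by omega))
    hr hrα (hb 1 le_rfl) (hb _ (by omega)).le
    (by rw [discount, ← hv]; exact hbv (n + 2) (by omega)) hκ1 ?_
  simp only [Set.ofPred_forall]
  exact MeasurableSet.iInter fun i => MeasurableSet.iInter fun hi =>
    measurableSet_le (measurable_discountedLoss_pastMeasurableSpace b (by omega)) measurable_const

/-- Corollary 2, i.i.d. environment.
Random sequences are 1-indexed (index `0` is time `0`): almost surely `R 0 = u`,
`α_k ≥ r_k` and `R_k ≥ (1+α_k) R_{k-1} − Y_k` for all `k ≥ 1`, where the `r_k ≥ 0`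
are constants and `v k = ∏_{j=1}^{k} 1/(1+r_j)` (so `v 0 = 1`).
Suppose `Y_k = b_k ξ_k` with positive constants `b_k` satisfying `b_k v_{k-1} ≤ b_1`,
the random vectors `(α_k, ξ_k)`, `k ≥ 1`, are i.i.d., and the variables
`Y*_k = Y_k/(1+α_k)` are mutually independent.  Then for every `κ ≥ 0` with
`E[e^{κ Y*_1}] ≤ 1`:
`P[∃ k ≥ 0, R_k < 0] ≤ e^{-κ u} · E[e^{κ Y*_1}] ≤ e^{-κ u}`. -/
theorem stmt16 {Ω : Type*} [MeasurableSpace Ω] (P : Measure Ω) [IsProbabilityMeasure P]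
    (u : ℝ) (hu : 0 < u)
    (r : ℕ → ℝ) (hr : ∀ k : ℕ, 1 ≤ k → 0 ≤ r k)
    (v : ℕ → ℝ) (hv : ∀ k, v k = ∏ j ∈ Finset.Icc 1 k, (1 + r j)⁻¹)
    (R Y α ξ : ℕ → Ω → ℝ)
    (hae : ∀ᵐ ω ∂P, R 0 ω = u ∧
      ∀ k : ℕ, 1 ≤ k → r k ≤ α k ω ∧ (1 + α k ω) * R (k - 1) ω - Y k ω ≤ R k ω)
    (b : ℕ → ℝ) (hb : ∀ k : ℕ, 1 ≤ k → 0 < b k)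
    (hYb : ∀ k : ℕ, 1 ≤ k → ∀ ω, Y k ω = b k * ξ k ω)
    (hbv : ∀ k : ℕ, 1 ≤ k → b k * v (k - 1) ≤ b 1)
    (hmeasα : ∀ k, Measurable (α k)) (hmeasξ : ∀ k, Measurable (ξ k))
    (hiid_indep : iIndepFun
      (fun k : ℕ => fun ω => (α (k + 1) ω, ξ (k + 1) ω)) P)
    (hiid_ident : ∀ k : ℕ, 1 ≤ k →
      Measure.map (fun ω => (α k ω, ξ k ω)) P = Measure.map (fun ω => (α 1 ω, ξ 1 ω)) P)
    (Ystar : ℕ → Ω → ℝ) (hYstar : ∀ k ω, Ystar k ω = Y k ω / (1 + α k ω))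
    (hindep : iIndepFun (fun k : ℕ => Ystar (k + 1)) P)
    (κ : ℝ) (hκ : 0 ≤ κ)
    (hκ1 : ∫⁻ ω, ENNReal.ofReal (Real.exp (κ * Ystar 1 ω)) ∂P ≤ 1) :
    P {ω | ∃ k : ℕ, R k ω < 0} ≤
      ENNReal.ofReal (Real.exp (-κ * u)) *
        ∫⁻ ω, ENNReal.ofReal (Real.exp (κ * Ystar 1 ω)) ∂P ∧
    ENNReal.ofReal (Real.exp (-κ * u)) *
        (∫⁻ ω, ENNReal.ofReal (Real.exp (κ * Ystar 1 ω)) ∂P) ≤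
      ENNReal.ofReal (Real.exp (-κ * u)) :=
  stmt16_general P u hu r hr v hv R Y α ξ hae b hb hYb hbv hmeasα hmeasξ hiid_indep hiid_ident Ystar
    hYstar κ hκ hκ1
end

section
/- Let Y_1, Y_2, … be mutually independent real-valued random variables where Y_n has the Gaussian distribution N(a_n, 1) with mean a_n and variance 1, and suppose a_1 + a_2 = −1 and a_n + a_{n+1} ≤ −1 for all n ≥ 1. Set S_k = Y_1 + ⋯ + Y_k. Then for every u > 0: P[sup_{k≥1} S_k > u] ≤ e^{max(a_1 + 1/2, 0)} · e^{−u}. -/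
/-!
With `A_k = a_1 + ⋯ + a_k`, the process `M_k = exp (S_k - A_k - k/2)` is Wald's exponential
martingale (`E e^{Y_n} = e^{a_n + 1/2}`), nonnegative with mean `1`. Pairing consecutive terms,
`a_n + a_{n+1} + 1 ≤ 0` gives `A_k + k/2 ≤ max (a_1 + 1/2) 0 =: b` for every `k ≥ 1`, so
`S_k > u` forces `M_k ≥ e^{u - b}`, and Ville's maximal inequality for nonnegative martingales
bounds the probability of that by `e^{b - u}`.
-/

open MeasureTheory ProbabilityTheory Finset Real

lemma sum_range_le_max_of_add_succ_nonpos {c : ℕ → ℝ} (hc : ∀ n, c n + c (n + 1) ≤ 0) :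
    ∀ n, ∑ k ∈ range n, c k ≤ max (c 0) 0
  | 0 => by simp
  | 1 => by simp
  | n + 2 => by
    have := sum_range_le_max_of_add_succ_nonpos hc n
    rw [sum_range_succ, sum_range_succ, add_assoc]
    linarith [hc n]

theorem Martingale.ville_ineq {Ω : Type*} {m0 : MeasurableSpace Ω} {μ : Measure Ω}
    [IsFiniteMeasure μ] {𝒢 : Filtration ℕ m0} {f : ℕ → Ω → ℝ} (hf : Martingale f 𝒢 μ)
    (hnonneg : 0 ≤ f) {ε : ℝ} (hε : 0 < ε) :
    μ (⋃ n, {ω | ε ≤ f n ω}) ≤ ENNReal.ofReal ((∫ ω, f 0 ω ∂μ) / ε) := by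
  set B : ℕ → Set Ω :=
    fun n => {ω | ε ≤ (range (n + 1)).sup' nonempty_range_add_one fun k => f k ω}
  have hB : Monotone B := fun n m hnm ω (hω : ε ≤ _) =>
    show ε ≤ _ from hω.trans (sup'_mono _ (range_subset_range.2 (by omega)) _)
  have hsub : ⋃ n, {ω | ε ≤ f n ω} ⊆ ⋃ n, B n :=
    Set.iUnion_mono fun n ω hω => hω.trans (le_sup' (fun k => f k ω) (self_mem_range_succ n))
  have hmax : ∀ n, μ (B n) ≤ ENNReal.ofReal ((∫ ω, f 0 ω ∂μ) / ε) := by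
    intro n
    have hdoob := maximal_ineq hf.submartingale hnonneg (ε := ε.toNNReal) n
    rw [Real.coe_toNNReal _ hε.le] at hdoob
    have hint : ∫ ω in B n, f n ω ∂μ ≤ ∫ ω, f 0 ω ∂μ :=
      calc ∫ ω in B n, f n ω ∂μ ≤ ∫ ω, f n ω ∂μ :=
            setIntegral_le_integral (hf.integrable n) (ae_of_all _ (hnonneg n))
        _ = ∫ ω, f 0 ω ∂μ := by
            simpa using (hf.setIntegral_eq (Nat.zero_le n) MeasurableSet.univ).symm
    rw [ENNReal.ofReal_div_of_pos hε, ENNReal.le_div_iff_mul_le (by simp [hε]) (by simp),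
      mul_comm]
    exact hdoob.trans (ENNReal.ofReal_le_ofReal hint)
  calc μ (⋃ n, {ω | ε ≤ f n ω}) ≤ μ (⋃ n, B n) := measure_mono hsub
    _ = ⨆ n, μ (B n) := hB.measure_iUnion
    _ ≤ _ := iSup_le hmax

section ExpMartingale

variable {Ω : Type*} {m0 : MeasurableSpace Ω} {P : Measure Ω} {X : ℕ → Ω → ℝ} {t : ℝ}

noncomputable def expMartingale (X : ℕ → Ω → ℝ) (P : Measure Ω) (t : ℝ) (n : ℕ) (ω : Ω) : ℝ :=
  exp (t * ∑ k ∈ range (n + 1), X k ω) / ∏ k ∈ range (n + 1), mgf (X k) P t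

lemma expMartingale_succ (n : ℕ) (ω : Ω) :
    expMartingale X P t (n + 1) ω =
      expMartingale X P t n ω * (exp (t * X (n + 1) ω) / mgf (X (n + 1)) P t) := by
  simp only [expMartingale]
  rw [sum_range_succ, prod_range_succ, mul_add, exp_add, mul_div_mul_comm]

lemma expMartingale_nonneg : 0 ≤ expMartingale X P t :=
  fun _ _ => div_nonneg (exp_pos _).le (prod_nonneg fun _ _ => mgf_nonneg)

lemma integral_expMartingale_zero [IsProbabilityMeasure P]
    (hint : Integrable (fun ω => exp (t * X 0 ω)) P) :
    ∫ ω, expMartingale X P t 0 ω ∂P = 1 := by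
  simp only [expMartingale, zero_add, range_one, sum_singleton, prod_singleton]
  rw [integral_div, ← mgf, div_self (mgf_pos hint).ne']

theorem martingale_expMartingale [IsProbabilityMeasure P] (hmeas : ∀ k, Measurable (X k))
    (hindep : iIndepFun X P) (hint : ∀ k, Integrable (fun ω => exp (t * X k ω)) P) :
    Martingale (expMartingale X P t)
      (Filtration.natural X fun k => (hmeas k).stronglyMeasurable) P := by
  set 𝒢 := Filtration.natural X fun k => (hmeas k).stronglyMeasurable
  have hadapted : StronglyAdapted 𝒢 (expMartingale X P t) := fun n => by
    have hsum : StronglyMeasurable[𝒢 n] fun ω => ∑ k ∈ range (n + 1), X k ω :=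
      Finset.stronglyMeasurable_fun_sum _ fun k hk =>
        (Filtration.stronglyAdapted_natural _ k).mono (𝒢.mono (by simp at hk; omega))
    exact ((hsum.measurable.const_mul t).exp.div_const _).stronglyMeasurable
  have hintegrable : ∀ n, Integrable (expMartingale X P t n) P := fun n => by
    have := hindep.integrable_exp_mul_sum hmeas (s := range (n + 1)) fun k _ => hint k
    simp only [Finset.sum_apply] at this
    exact this.div_const _
  refine martingale_nat hadapted hintegrable fun n => ?_
  set Z := fun ω => exp (t * X (n + 1) ω) / mgf (X (n + 1)) P t
  have hsucc : expMartingale X P t (n + 1) = expMartingale X P t n * Z :=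
    funext (expMartingale_succ n)
  have hZ : P[Z | 𝒢 n] =ᵐ[P] fun _ => 1 := by
    have hZmeas : StronglyMeasurable[MeasurableSpace.comap (X (n + 1)) inferInstance] Z :=
      (((comap_measurable _).const_mul t).exp.div_const _).stronglyMeasurable
    refine (condExp_indep_eq (hmeas _).comap_le (𝒢.le n) hZmeas
      (hindep.indep_comap_natural_of_lt _ n.lt_succ_self)).trans (ae_of_all _ fun _ => ?_)
    rw [integral_div, ← mgf, div_self (mgf_pos (hint _)).ne']
  filter_upwards [condExp_mul_of_stronglyMeasurable_left (hadapted n)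
    (hsucc ▸ hintegrable (n + 1)) ((hint _).div_const _), hZ] with ω h1 h2
  rw [hsucc, h1, Pi.mul_apply, h2, mul_one]

end ExpMartingale

theorem stmt17_general {Ω : Type*} [MeasurableSpace Ω] (P : Measure Ω) [IsProbabilityMeasure P]
    (Y : ℕ → Ω → ℝ)
    (hmeas : ∀ i, Measurable (Y i))
    (hindep : iIndepFun (fun k : ℕ => Y (k + 1)) P)
    (a : ℕ → ℝ)
    (hgauss : ∀ n : ℕ, 1 ≤ n → Measure.map (Y n) P = gaussianReal (a n) 1)
    (ha : ∀ n : ℕ, 1 ≤ n → a n + a (n + 1) ≤ -1)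
    (S : ℕ → Ω → ℝ) (hS : ∀ k ω, S k ω = ∑ j ∈ Finset.Icc 1 k, Y j ω)
    (u : ℝ) :
    P (⋃ k : ℕ, {ω | u < S (k + 1) ω}) ≤
      ENNReal.ofReal (Real.exp (max (a 1 + 1 / 2) 0) * Real.exp (-u)) := by
  set X : ℕ → Ω → ℝ := fun k => Y (k + 1)
  set b := max (a 1 + 1 / 2) 0
  have hmgf : ∀ k, mgf (X k) P 1 = exp (a (k + 1) + 1 / 2) := fun k => by
    rw [mgf_gaussianReal (hgauss _ k.succ_pos)]; norm_num
  have hint : ∀ k, Integrable (fun ω => exp (1 * X k ω)) P := fun k => by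
    rw [← mgf_pos_iff, hmgf]; exact exp_pos _
  have hdrift : ∀ k, ∑ j ∈ range (k + 1), (a (j + 1) + 1 / 2) ≤ b := fun k =>
    sum_range_le_max_of_add_succ_nonpos (c := fun j => a (j + 1) + 1 / 2)
      (fun n => by linarith [ha (n + 1) n.succ_pos]) (k + 1)
  have hsub :
      ⋃ k, {ω | u < S (k + 1) ω} ⊆ ⋃ k, {ω | exp (u - b) ≤ expMartingale X P 1 k ω} := by
    refine Set.iUnion_mono fun k ω (hω : u < S (k + 1) ω) => ?_
    show exp (u - b) ≤ expMartingale X P 1 k ω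
    have hSX : S (k + 1) ω = ∑ j ∈ range (k + 1), X j ω := by
      rw [hS, ← Ico_add_one_right_eq_Icc, range_eq_Ico, sum_Ico_add' (fun j => Y j ω)]
    simp only [expMartingale, one_mul, prod_congr rfl fun j _ => hmgf j,
      ← exp_sum, ← exp_sub, exp_le_exp]
    linarith [hdrift k]
  calc P (⋃ k, {ω | u < S (k + 1) ω})
      ≤ P (⋃ k, {ω | exp (u - b) ≤ expMartingale X P 1 k ω}) := measure_mono hsub
    _ ≤ ENNReal.ofReal ((∫ ω, expMartingale X P 1 0 ω ∂P) / exp (u - b)) :=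
      Martingale.ville_ineq (martingale_expMartingale (fun k => hmeas (k + 1)) hindep hint)
        expMartingale_nonneg (exp_pos _)
    _ = ENNReal.ofReal (exp b * exp (-u)) := by
      rw [integral_expMartingale_zero (hint 0), one_div, ← exp_neg, ← exp_add]
      congr 2
      ring

/-- Example 1: Gaussian non-homogeneous model.
Random variables are 1-indexed (index `0` unused): `Y n ∼ N(a n, 1)` for `n ≥ 1`,
mutually independent, with `a 1 + a 2 = −1` and `a n + a (n+1) ≤ −1` for all `n ≥ 1`;
`S k = Y_1 + ⋯ + Y_k = ∑_{j=1}^{k} Y j`.  Then for every `u > 0`: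
`P[sup_{k≥1} S_k > u] ≤ e^{max(a_1 + 1/2, 0)} · e^{-u}`. -/
theorem stmt17 {Ω : Type*} [MeasurableSpace Ω] (P : Measure Ω) [IsProbabilityMeasure P]
    (Y : ℕ → Ω → ℝ)
    (hmeas : ∀ i, Measurable (Y i))
    (hindep : iIndepFun (fun k : ℕ => Y (k + 1)) P)
    (a : ℕ → ℝ)
    (hgauss : ∀ n : ℕ, 1 ≤ n → Measure.map (Y n) P = gaussianReal (a n) 1)
    (ha12 : a 1 + a 2 = -1)
    (ha : ∀ n : ℕ, 1 ≤ n → a n + a (n + 1) ≤ -1)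
    (S : ℕ → Ω → ℝ) (hS : ∀ k ω, S k ω = ∑ j ∈ Finset.Icc 1 k, Y j ω)
    (u : ℝ) (hu : 0 < u) :
    P (⋃ k : ℕ, {ω | u < S (k + 1) ω}) ≤
      ENNReal.ofReal (Real.exp (max (a 1 + 1 / 2) 0) * Real.exp (-u)) :=
  stmt17_general P Y hmeas hindep a hgauss ha S hS u
end

section
/- Let Y_1, Y_2, … be mutually independent random variables with P[Y_n = 1] = 1/(n+1) and P[Y_n = −1] = n/(n+1) for each n ≥ 1, and set S_k = Y_1 + ⋯ + Y_k. Then (a) for all h > 0 and u > 0: P[sup_{k≥1} S_k > u] ≤ exp(−hu + h e^{h}), and (b) for every u > 2: P[sup_{k≥1} S_k > u] ≤ (2/u)^{u/2}. -/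
/-!
For `h > 0` the process `M_n = exp (h S_n) / 𝔼[exp (h S_n)]` is a nonnegative martingale of mean
one, so Doob's maximal inequality gives `P[max_{k ≤ n} M_k ≥ λ] ≤ 1 / λ`. The moment generating
function of `Y_n` is `(e^h + n e^{-h}) / (n + 1)`: it is at most `e^h`, and at most `1` once
`n ≥ e^h`, so `𝔼[exp (h S_n)] ≤ e^{h ⌊e^h⌋} ≤ exp (h e^h)` uniformly in `n`, which gives (a).
Part (b) is (a) at `h = log (u / 2)`.
-/

open MeasureTheory ProbabilityTheory ENNReal Finset Real

namespace ProbabilityTheory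

variable {Ω : Type*} [MeasurableSpace Ω] {μ : Measure Ω} {X : ℕ → Ω → ℝ} {t : ℝ}

/-- The index is shifted so that the `n`-th term involves `X 0, …, X n` and the process is adapted
to the natural filtration of `X`. -/
noncomputable def expSumMartingale (X : ℕ → Ω → ℝ) (μ : Measure Ω) (t : ℝ) (n : ℕ) (ω : Ω) :
    ℝ :=
  exp (t * ∑ i ∈ range (n + 1), X i ω) / ∏ i ∈ range (n + 1), mgf (X i) μ t

lemma expSumMartingale_nonneg (n : ℕ) (ω : Ω) : 0 ≤ expSumMartingale X μ t n ω :=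
  div_nonneg (exp_pos _).le (prod_nonneg fun _ _ ↦ mgf_nonneg)

lemma expSumMartingale_succ [IsProbabilityMeasure μ]
    (hint : ∀ i, Integrable (fun ω ↦ exp (t * X i ω)) μ) (n : ℕ) :
    expSumMartingale X μ t (n + 1) =
      expSumMartingale X μ t n * fun ω ↦ exp (t * X (n + 1) ω) / mgf (X (n + 1)) μ t := by
  have := (mgf_pos (hint (n + 1))).ne'
  ext ω
  simp only [expSumMartingale, Pi.mul_apply, sum_range_succ _ (n + 1), prod_range_succ _ (n + 1),
    mul_add, exp_add]
  field_simp

section Independent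

variable (hmeas : ∀ i, Measurable (X i)) (hindep : iIndepFun X μ)
  (hint : ∀ i, Integrable (fun ω ↦ exp (t * X i ω)) μ)
include hmeas hindep hint

lemma integrable_expSumMartingale (n : ℕ) : Integrable (expSumMartingale X μ t n) μ := by
  have := hindep.isProbabilityMeasure
  unfold expSumMartingale
  simpa only [Finset.sum_apply] using
    (hindep.integrable_exp_mul_sum hmeas (s := range (n + 1)) fun i _ ↦ hint i).div_const _

lemma integral_expSumMartingale (n : ℕ) : μ[expSumMartingale X μ t n] = 1 := by
  have := hindep.isProbabilityMeasure
  have hsum := hindep.mgf_sum (t := t) hmeas (range (n + 1))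
  simp only [mgf, Finset.sum_apply] at hsum
  unfold expSumMartingale
  rw [integral_div, hsum]
  exact div_self (prod_pos fun i _ ↦ mgf_pos (hint i)).ne'

theorem martingale_expSumMartingale :
    Martingale (expSumMartingale X μ t)
      (Filtration.natural X fun i ↦ (hmeas i).stronglyMeasurable) μ := by
  have := hindep.isProbabilityMeasure
  set ℱ := Filtration.natural X fun i ↦ (hmeas i).stronglyMeasurable
  have hadapted : StronglyAdapted ℱ (expSumMartingale X μ t) := by
    intro n
    have hX : ∀ i ∈ range (n + 1), Measurable[ℱ n] (X i) := fun i hi ↦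
      ((Filtration.stronglyAdapted_natural _ i).mono
        (ℱ.mono (Nat.lt_succ_iff.1 (mem_range.1 hi)))).measurable
    exact (((Finset.measurable_sum _ hX).const_mul t).exp.div_const _).stronglyMeasurable
  refine martingale_nat hadapted (integrable_expSumMartingale hmeas hindep hint) fun n ↦ ?_
  set Z : Ω → ℝ := fun ω ↦ exp (t * X (n + 1) ω) / mgf (X (n + 1)) μ t
  have hZ_meas : StronglyMeasurable[MeasurableSpace.comap (X (n + 1)) inferInstance] Z :=
    ((measurable_id.const_mul t).exp.div_const _ |>.comp
      (comap_measurable (X (n + 1)))).stronglyMeasurable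
  have hZ_mean : μ[Z] = 1 := by
    rw [integral_div]
    exact div_self (mgf_pos (hint (n + 1))).ne'
  have hZ_condExp := condExp_indep_eq (hmeas (n + 1)).comap_le (ℱ.le n) hZ_meas
    (hindep.indep_comap_natural_of_lt (fun i ↦ (hmeas i).stronglyMeasurable) n.lt_succ_self)
  rw [expSumMartingale_succ hint]
  refine (condExp_mul_of_stronglyMeasurable_left (hadapted n) ?_
    ((hint (n + 1)).div_const _)).trans ?_ |>.symm
  · rw [← expSumMartingale_succ hint]
    exact integrable_expSumMartingale hmeas hindep hint _
  · filter_upwards [hZ_condExp] with ω hω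
    change expSumMartingale X μ t n ω * μ[Z | ℱ n] ω = _
    rw [hω, hZ_mean, mul_one]

theorem measure_iUnion_lt_sum_range_le (ht : 0 < t) (u : ℝ) {C : ℝ}
    (hC : ∀ n, ∏ i ∈ range n, mgf (X i) μ t ≤ C) :
    μ (⋃ k, {ω | u < ∑ i ∈ range (k + 1), X i ω}) ≤ ENNReal.ofReal (C * exp (-(t * u))) := by
  have := hindep.isProbabilityMeasure
  have hC_pos : 0 < C := one_pos.trans_le (by simpa using hC 0)
  set M := expSumMartingale X μ t
  set ε : NNReal := (exp (t * u) / C).toNNReal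
  have hε : (ε : ℝ) = exp (t * u) / C := Real.coe_toNNReal _ (by positivity)
  have hε_inv : (ε : ℝ≥0∞)⁻¹ = ENNReal.ofReal (C * exp (-(t * u))) := by
    rw [ENNReal.coe_nnreal_eq, hε, ← ENNReal.ofReal_inv_of_pos (by positivity), inv_div,
      div_eq_mul_inv, exp_neg]
  rw [measure_iUnion_eq_iSup_accumulate, ← hε_inv]
  refine iSup_le fun n ↦ ENNReal.le_inv_iff_mul_le.2 ?_
  set A := {ω | (ε : ℝ) ≤ (range (n + 1)).sup' nonempty_range_add_one fun k ↦ M k ω}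
  have hsub : Set.accumulate (fun k ↦ {ω | u < ∑ i ∈ range (k + 1), X i ω}) n ⊆ A := by
    intro ω hω
    obtain ⟨k, hk, hω⟩ := Set.mem_accumulate.1 hω
    calc (ε : ℝ) = exp (t * u) / C := hε
      _ ≤ M k ω :=
        div_le_div₀ (exp_pos _).le (exp_le_exp.2 (mul_le_mul_of_nonneg_left hω.le ht.le))
          (prod_pos fun i _ ↦ mgf_pos (hint i)) (hC _)
      _ ≤ _ := le_sup' (fun k ↦ M k ω) (mem_range_succ_iff.2 hk)
  have hdoob := maximal_ineq (martingale_expSumMartingale hmeas hindep hint).submartingale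
    (fun k ω ↦ expSumMartingale_nonneg k ω) (ε := ε) n
  have hA : ∫ ω in A, M n ω ∂μ ≤ 1 :=
    (setIntegral_le_integral (integrable_expSumMartingale hmeas hindep hint n)
      (ae_of_all _ (expSumMartingale_nonneg n))).trans_eq
      (integral_expSumMartingale hmeas hindep hint n)
  calc _ ≤ μ A * ε := by gcongr
    _ ≤ 1 := by
      rw [mul_comm]
      exact hdoob.trans (ENNReal.ofReal_le_one.2 hA)

end Independent

end ProbabilityTheory

theorem integral_comp_of_forall_eq_or_eq {Ω E : Type*} [MeasurableSpace Ω] {μ : Measure Ω}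
    [IsFiniteMeasure μ] [MeasurableSpace E] [MeasurableSingletonClass E] {Z : Ω → E}
    (hZ : Measurable Z) {a b : E} (hab : a ≠ b) (hZab : ∀ ω, Z ω = a ∨ Z ω = b) (f : E → ℝ) :
    ∫ ω, f (Z ω) ∂μ = μ.real {ω | Z ω = a} * f a + μ.real {ω | Z ω = b} * f b := by
  have hmeas : ∀ c, MeasurableSet {ω | Z ω = c} := fun c ↦ hZ (measurableSet_singleton c)
  have hsplit : (fun ω ↦ f (Z ω)) =
      {ω | Z ω = a}.indicator (fun _ ↦ f a) + {ω | Z ω = b}.indicator (fun _ ↦ f b) := by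
    ext ω
    rcases hZab ω with h | h <;> simp [Set.indicator, h, hab, hab.symm]
  rw [hsplit, integral_add' ((integrable_const _).indicator (hmeas a))
    ((integrable_const _).indicator (hmeas b)), integral_indicator_const _ (hmeas a),
    integral_indicator_const _ (hmeas b), smul_eq_mul, smul_eq_mul]

theorem prod_range_le_pow_of_le_one {c : ℕ → ℝ} {a : ℝ} {m : ℕ} (ha : 1 ≤ a)
    (hc_nonneg : ∀ i, 0 ≤ c i) (hc_le : ∀ i, c i ≤ a) (hc_le_one : ∀ i, m ≤ i → c i ≤ 1)
    (n : ℕ) : ∏ i ∈ range n, c i ≤ a ^ m := by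
  calc ∏ i ∈ range n, c i ≤ ∏ i ∈ range n, if i < m then a else 1 :=
        prod_le_prod (fun i _ ↦ hc_nonneg i) fun i _ ↦ by
          split_ifs with hi
          exacts [hc_le i, hc_le_one i (not_lt.1 hi)]
    _ = a ^ #{i ∈ range n | i < m} := by rw [prod_ite, prod_const_one, mul_one, prod_const]
    _ ≤ a ^ m := pow_le_pow_right₀ ha <| (card_le_card fun i hi ↦ mem_range.2
        (mem_filter.1 hi).2).trans_eq (card_range m)

section TwoPoint

variable {h n : ℝ}

lemma two_point_exp_le_exp (hh : 0 ≤ h) (hn : 0 ≤ n) :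
    (n + 1)⁻¹ * exp h + n / (n + 1) * exp (-h) ≤ exp h := by
  have : exp (-h) ≤ exp h := exp_le_exp.2 (by linarith)
  rw [inv_mul_eq_div, div_mul_eq_mul_div, ← add_div, div_le_iff₀ (by positivity)]
  nlinarith

lemma two_point_exp_le_one (hh : 0 ≤ h) (hn : exp h ≤ n) :
    (n + 1)⁻¹ * exp h + n / (n + 1) * exp (-h) ≤ 1 := by
  have h1 : 1 ≤ exp h := one_le_exp hh
  have h2 : exp h * exp (-h) = 1 := by rw [← exp_add, add_neg_cancel, exp_zero]
  rw [inv_mul_eq_div, div_mul_eq_mul_div, ← add_div, div_le_one (by linarith)]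
  have h3 : 1 ≤ n * exp (-h) := h2 ▸ mul_le_mul_of_nonneg_right hn (exp_pos _).le
  nlinarith [mul_nonneg (sub_nonneg.2 h1) (sub_nonneg.2 h3)]

lemma prod_range_two_point_le (hh : 0 ≤ h) (N : ℕ) :
    ∏ i ∈ range N, ((((i + 1 : ℕ) : ℝ) + 1)⁻¹ * exp h +
      ((i + 1 : ℕ) : ℝ) / (((i + 1 : ℕ) : ℝ) + 1) * exp (-h)) ≤ exp (h * exp h) := by
  set m := ⌊exp h⌋₊
  have hfloor : ∀ i, m ≤ i → exp h ≤ ((i + 1 : ℕ) : ℝ) := fun i hi ↦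
    (Nat.lt_floor_add_one (exp h)).le.trans (by exact_mod_cast Nat.succ_le_succ hi)
  calc _ ≤ exp h ^ m := prod_range_le_pow_of_le_one (one_le_exp hh) (fun i ↦ by positivity)
        (fun i ↦ two_point_exp_le_exp hh (by positivity))
        (fun i hi ↦ two_point_exp_le_one hh (hfloor i hi)) N
    _ = exp (m * h) := (exp_nat_mul h m).symm
    _ ≤ exp (h * exp h) := exp_le_exp.2 <| by
        rw [mul_comm]; exact mul_le_mul_of_nonneg_left (Nat.floor_le (exp_pos h).le) hh

lemma mgf_eq_of_two_point {Ω : Type*} [MeasurableSpace Ω] {μ : Measure Ω} [IsFiniteMeasure μ]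
    {Z : Ω → ℝ} (hZ : Measurable Z) (hZ_vals : ∀ ω, Z ω = 1 ∨ Z ω = -1) {k : ℕ}
    (hZ_one : μ {ω | Z ω = 1} = ((k : ℝ≥0∞) + 1)⁻¹)
    (hZ_neg_one : μ {ω | Z ω = -1} = (k : ℝ≥0∞) / ((k : ℝ≥0∞) + 1)) (t : ℝ) :
    mgf Z μ t = ((k : ℝ) + 1)⁻¹ * exp t + k / ((k : ℝ) + 1) * exp (-t) := by
  have hk : ((k : ℝ≥0∞) + 1).toReal = k + 1 := by norm_cast
  rw [mgf, integral_comp_of_forall_eq_or_eq hZ (by norm_num) hZ_vals fun x ↦ exp (t * x)]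
  simp [measureReal_def, hZ_one, hZ_neg_one, ENNReal.toReal_div, ENNReal.toReal_inv, hk]

end TwoPoint

/-- Example 4: two-valued non-homogeneous model.
Random variables are 1-indexed (index `0` unused): for `n ≥ 1`, `Y n` takes the
value `1` with probability `1/(n+1)` and the value `−1` with probability `n/(n+1)`,
the `Y n` being mutually independent; `S k = Y_1 + ⋯ + Y_k = ∑_{j=1}^{k} Y j`.
Then (a) for all `h > 0` and `u > 0`,
`P[sup_{k≥1} S_k > u] ≤ exp(−h u + h e^h)`, and
(b) for every `u > 2`, `P[sup_{k≥1} S_k > u] ≤ (2/u)^{u/2}`. -/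
theorem stmt19 {Ω : Type*} [MeasurableSpace Ω] (P : Measure Ω) [IsProbabilityMeasure P]
    (Y : ℕ → Ω → ℝ)
    (hmeas : ∀ i, Measurable (Y i))
    (hindep : iIndepFun (fun k : ℕ => Y (k + 1)) P)
    (hone : ∀ n : ℕ, 1 ≤ n → P {ω | Y n ω = 1} = ((n : ℝ≥0∞) + 1)⁻¹)
    (hmone : ∀ n : ℕ, 1 ≤ n → P {ω | Y n ω = -1} = (n : ℝ≥0∞) / ((n : ℝ≥0∞) + 1))
    (hvals : ∀ n : ℕ, 1 ≤ n → ∀ ω, Y n ω = 1 ∨ Y n ω = -1)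
    (S : ℕ → Ω → ℝ) (hS : ∀ k ω, S k ω = ∑ j ∈ Finset.Icc 1 k, Y j ω) :
    (∀ h u : ℝ, 0 < h → 0 < u →
      P (⋃ k : ℕ, {ω | u < S (k + 1) ω}) ≤
        ENNReal.ofReal (Real.exp (-h * u + h * Real.exp h))) ∧
    ∀ u : ℝ, 2 < u →
      P (⋃ k : ℕ, {ω | u < S (k + 1) ω}) ≤
        ENNReal.ofReal ((2 / u) ^ (u / 2)) := by
  have hS_range : ∀ k ω, S (k + 1) ω = ∑ i ∈ range (k + 1), Y (i + 1) ω := fun k ω ↦ by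
    rw [hS, range_eq_Ico, sum_Ico_add' (Y · ω), zero_add, Ico_add_one_right_eq_Icc]
  have hvals' : ∀ i ω, Y (i + 1) ω = 1 ∨ Y (i + 1) ω = -1 := fun i ↦ hvals (i + 1) i.succ_pos
  have hint : ∀ t i, Integrable (fun ω ↦ exp (t * Y (i + 1) ω)) P := fun t i ↦
    integrable_exp_mul_of_mem_Icc (a := -1) (b := 1) (hmeas _).aemeasurable <|
      ae_of_all _ fun ω ↦ by rcases hvals' i ω with hω | hω <;> simp [hω]
  have hmgf : ∀ t (i : ℕ), mgf (Y (i + 1)) P t = (((i + 1 : ℕ) : ℝ) + 1)⁻¹ * exp t +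
      ((i + 1 : ℕ) : ℝ) / (((i + 1 : ℕ) : ℝ) + 1) * exp (-t) := fun t i ↦
    mgf_eq_of_two_point (hmeas _) (hvals' i) (hone _ i.succ_pos) (hmone _ i.succ_pos) t
  have part_a : ∀ h u : ℝ, 0 < h → 0 < u → P (⋃ k : ℕ, {ω | u < S (k + 1) ω}) ≤
      ENNReal.ofReal (exp (-h * u + h * exp h)) := fun h u hh _ ↦ by
    simp_rw [hS_range]
    calc _ ≤ ENNReal.ofReal (exp (h * exp h) * exp (-(h * u))) :=
          measure_iUnion_lt_sum_range_le (fun i ↦ hmeas _) hindep (hint h) hh u fun N ↦ by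
            simpa only [hmgf] using prod_range_two_point_le hh.le N
      _ = _ := by rw [← exp_add, neg_mul, add_comm]
  refine ⟨part_a, fun u hu ↦ ?_⟩
  have hexp : exp (log (u / 2)) = u / 2 := exp_log (by linarith)
  convert part_a (log (u / 2)) u (log_pos (by linarith)) (by linarith) using 2
  rw [rpow_def_of_pos (by positivity), ← inv_div u 2, Real.log_inv, hexp]
  ring_nf
end
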